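/- arXiv:2201.07736 — 3 statements merged into one kernel-verified Lean document; each statement's English description precedes it below -/
import Mathlib

section
/- Russo–Margulis lemma: for any monotone Boolean function f : {0,1}^n → {0,1}, the function Φ_f(p) = E_{x∼{0,1}^n_p}[f(x)] is differentiable on (0,1) and its derivative equals the total p-biased flip influence: dΦ_f/dp = Σ_{i=1}^n Pr_{x∼{0,1}^n_p}[f(x) ≠ f(x^{⊕i})]. -/
open Finset

/-- Flip coordinate `i` of `x`. -/
def flipAt {n : ℕ} (x : Fin n → Bool) (i : Fin n) : Fin n → Bool :=
  Function.update x i (!x i)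

/-- The `p`-biased weight (probability) of the point `x` in the product distribution
where each bit is `1` independently with probability `p`. -/
noncomputable def w {n : ℕ} (p : ℝ) (x : Fin n → Bool) : ℝ :=
  ∏ i, if x i then p else 1 - p

/-- The `p`-biased expectation of `f`. -/
noncomputable def Ep {n : ℕ} (p : ℝ) (f : (Fin n → Bool) → Bool) : ℝ :=
  ∑ x, w p x * (if f x then 1 else 0)

/-- The `p`-biased flip influence of coordinate `i` on `f`:
`Pr_{x ∼ {0,1}^n_p}[f(x) ≠ f(x^{⊕i})]`. -/
noncomputable def flipInf {n : ℕ} (i : Fin n) (p : ℝ) (f : (Fin n → Bool) → Bool) : ℝ :=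
  ∑ x, w p x * (if f (flipAt x i) ≠ f x then 1 else 0)

/-- The `p`-biased rerandomized influence of coordinate `i` on `f`:
`2·Pr[f(x) ≠ f(x^{∼i})]`, where `x^{∼i}` has coordinate `i` resampled `p`-biased. -/
noncomputable def rerandInf {n : ℕ} (i : Fin n) (p : ℝ) (f : (Fin n → Bool) → Bool) : ℝ :=
  2 * ∑ x, ∑ b : Bool, w p x * (if b then p else 1 - p) *
    (if f (Function.update x i b) ≠ f x then 1 else 0)

/-- The `p`-biased variance of `f`. -/
noncomputable def Varp {n : ℕ} (p : ℝ) (f : (Fin n → Bool) → Bool) : ℝ :=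
  Ep p f * (1 - Ep p f)

/-- The restriction of `f` fixing coordinate `i` to the bit `b`
(viewed as a function on the full cube that ignores coordinate `i`). -/
def restrict {n : ℕ} (f : (Fin n → Bool) → Bool) (i : Fin n) (b : Bool) :
    (Fin n → Bool) → Bool :=
  fun x => f (Function.update x i b)


lemma flipAt_flipAt {n : ℕ} (x : Fin n → Bool) (i : Fin n) : flipAt (flipAt x i) i = x := by
  funext j
  by_cases h : j = i
  · subst h; simp [flipAt]
  · simp [flipAt, Function.update_of_ne h]

lemma sum_flip {n : ℕ} (i : Fin n) (g : (Fin n → Bool) → ℝ) :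
    ∑ x, g (flipAt x i) = ∑ x, g x :=
  Equiv.sum_comp (Function.Involutive.toPerm (fun x => flipAt x i)
    (fun x => flipAt_flipAt x i)) g

lemma flipAt_apply_self {n : ℕ} (x : Fin n → Bool) (i : Fin n) : flipAt x i i = !x i := by
  simp [flipAt]

lemma wer_flip {n : ℕ} (p : ℝ) (x : Fin n → Bool) (i : Fin n) :
    (∏ j ∈ univ.erase i, (if flipAt x i j then p else 1 - p))
      = ∏ j ∈ univ.erase i, (if x j then p else 1 - p) :=
  Finset.prod_congr rfl fun j hj => by
    rw [flipAt, Function.update_of_ne (Finset.mem_erase.mp hj).1]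

lemma w_split {n : ℕ} (p : ℝ) (x : Fin n → Bool) (i : Fin n) :
    w p x = (if x i then p else 1 - p) * ∏ j ∈ univ.erase i, (if x j then p else 1 - p) :=
  (Finset.mul_prod_erase univ _ (mem_univ i)).symm

noncomputable def tfun {n : ℕ} (f : (Fin n → Bool) → Bool) (i : Fin n) (p : ℝ)
    (y : Fin n → Bool) : ℝ :=
  (∏ j ∈ univ.erase i, (if y j then p else 1 - p)) *
    ((if y i then (1:ℝ) else -1) * (if f y then 1 else 0))

noncomputable def ufun {n : ℕ} (f : (Fin n → Bool) → Bool) (i : Fin n) (p : ℝ)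
    (y : Fin n → Bool) : ℝ :=
  w p y * (if f (flipAt y i) ≠ f y then (1:ℝ) else 0)

lemma key {n : ℕ} (f : (Fin n → Bool) → Bool)
    (hmono : ∀ x y : Fin n → Bool, (∀ j, x j ≤ y j) → f x ≤ f y)
    (i : Fin n) (p : ℝ) (x : Fin n → Bool) :
    tfun f i p x + tfun f i p (flipAt x i) = ufun f i p x + ufun f i p (flipAt x i) := by
  have hupd : f (Function.update x i false) ≤ f (Function.update x i true) := by
    apply hmono; intro j
    by_cases h : j = i
    · subst h; simp
    · simp [Function.update_of_ne h]
  unfold tfun ufun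
  rw [wer_flip, w_split p x i, w_split p (flipAt x i) i, flipAt_flipAt, wer_flip,
    flipAt_apply_self]
  cases hxi : x i
  · have hx : Function.update x i false = x := by rw [← hxi]; exact Function.update_eq_self i x
    have hflip : flipAt x i = Function.update x i true := by
      rw [flipAt, hxi]; rfl
    have hab := hupd
    rw [hx, ← hflip] at hab
    simp only [hxi, Bool.not_false]
    cases ha : f x <;> cases hb : f (flipAt x i) <;>
      simp [ha, hb] at hab ⊢ <;> first | ring1 | exact absurd hab (by decide)
  · have hx : Function.update x i true = x := by rw [← hxi]; exact Function.update_eq_self i x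
    have hflip : flipAt x i = Function.update x i false := by
      rw [flipAt, hxi]; rfl
    have hab := hupd
    rw [hx, ← hflip] at hab
    simp only [hxi, Bool.not_true]
    cases ha : f x <;> cases hb : f (flipAt x i) <;>
      simp [ha, hb] at hab ⊢ <;> first | ring1 | exact absurd hab (by decide)

lemma sum_t_eq {n : ℕ} (f : (Fin n → Bool) → Bool)
    (hmono : ∀ x y : Fin n → Bool, (∀ j, x j ≤ y j) → f x ≤ f y)
    (i : Fin n) (p : ℝ) :
    ∑ x, tfun f i p x = flipInf i p f := by
  have h2 : (2:ℝ) * ∑ x, tfun f i p x = 2 * ∑ x, ufun f i p x := by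
    rw [two_mul, two_mul]
    calc (∑ x, tfun f i p x) + ∑ x, tfun f i p x
        = (∑ x, tfun f i p x) + ∑ x, tfun f i p (flipAt x i) := by rw [sum_flip]
      _ = ∑ x, (tfun f i p x + tfun f i p (flipAt x i)) := by rw [Finset.sum_add_distrib]
      _ = ∑ x, (ufun f i p x + ufun f i p (flipAt x i)) :=
          Finset.sum_congr rfl fun x _ => key f hmono i p x
      _ = (∑ x, ufun f i p x) + ∑ x, ufun f i p (flipAt x i) := by rw [Finset.sum_add_distrib]
      _ = (∑ x, ufun f i p x) + ∑ x, ufun f i p x := by rw [sum_flip]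
  have := mul_left_cancel₀ (two_ne_zero (α := ℝ)) h2
  rw [this]; rfl

lemma hasDeriv_w {n : ℕ} (x : Fin n → Bool) (p : ℝ) :
    HasDerivAt (fun q => w q x)
      (∑ i, (∏ j ∈ univ.erase i, (if x j then p else 1 - p)) * (if x i then (1:ℝ) else -1)) p := by
  have h := HasDerivAt.fun_finsetProd (u := (univ : Finset (Fin n)))
    (f := fun j q => if x j then q else 1 - q)
    (f' := fun j => if x j then (1:ℝ) else -1) (x := p) ?_
  · simpa [w, smul_eq_mul] using h
  · intro j _
    cases hxj : x j
    · simpa [hxj] using (hasDerivAt_id p).const_sub 1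
    · simpa [hxj] using hasDerivAt_id' p

/-- Russo–Margulis lemma: for monotone `f`, the map `p ↦ E_p[f]` is differentiable on
`(0,1)` with derivative the total `p`-biased flip influence. -/
theorem russo_margulis {n : ℕ} (f : (Fin n → Bool) → Bool)
    (hmono : ∀ x y : Fin n → Bool, (∀ j, x j ≤ y j) → f x ≤ f y)
    (p : ℝ) (hp : p ∈ Set.Ioo (0 : ℝ) 1) :
    HasDerivAt (fun q => Ep q f) (∑ i, flipInf i p f) p := by
  have hD : HasDerivAt (fun q => Ep q f)
      (∑ x, (∑ i, (∏ j ∈ univ.erase i, (if x j then p else 1 - p)) * (if x i then (1:ℝ) else -1))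
        * (if f x then (1:ℝ) else 0)) p :=
    HasDerivAt.fun_sum fun x _ => (hasDeriv_w x p).mul_const _
  convert hD using 1
  rw [eq_comm]
  calc ∑ x, (∑ i, (∏ j ∈ univ.erase i, (if x j then p else 1 - p)) * (if x i then (1:ℝ) else -1))
        * (if f x then (1:ℝ) else 0)
      = ∑ x, ∑ i, tfun f i p x := by
        refine Finset.sum_congr rfl fun x _ => ?_
        rw [Finset.sum_mul]
        exact Finset.sum_congr rfl fun i _ => by rw [tfun, mul_assoc]
    _ = ∑ i, ∑ x, tfun f i p x := Finset.sum_comm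
    _ = ∑ i, flipInf i p f := Finset.sum_congr rfl fun i _ => sum_t_eq f hmono i p
end

section
/- For any monotone Boolean function f : {0,1}^n → {0,1} with certificate complexity C(f) ≤ k, the function Φ_f(p) = E_p[f] is k-Lipschitz: for all q ≠ r in [0,1], (Φ_f(q) − Φ_f(r))/(q − r) ≤ k. -/
open Finset

/-- `S` is a certificate for `f`'s value on `x`. -/
def IsCert {n : ℕ} (f : (Fin n → Bool) → Bool) (x : Fin n → Bool) (S : Finset (Fin n)) : Prop :=
  ∀ y, (∀ i ∈ S, y i = x i) → f y = f x

/-- `f` has certificate complexity at most `k`. -/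
def CertLe {n : ℕ} (f : (Fin n → Bool) → Bool) (k : ℕ) : Prop :=
  ∀ x, ∃ S : Finset (Fin n), IsCert f x S ∧ S.card ≤ k

/-!
Margulis–Russo: differentiating the product weights and pairing each `x` with its flip at `i`
gives `d/dp E_p[F] = E_p[∑ᵢ (F(x^{i←1}) - F(x^{i←0}))]`. For Boolean `f` the `i`-th term is at
most `1`, and it vanishes unless `i` belongs to every certificate for `x`; so on `[0, 1]` the
derivative of `p ↦ E_p[f]` is at most `k`, and the mean value theorem bounds the slopes.
-/

open Function

section

variable {n : ℕ}

def bitWeight (p : ℝ) (b : Bool) : ℝ := if b then p else 1 - p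

noncomputable def wExcept (p : ℝ) (x : Fin n → Bool) (i : Fin n) : ℝ :=
  ∏ j ∈ univ.erase i, bitWeight p (x j)

noncomputable def wExpect (p : ℝ) (F : (Fin n → Bool) → ℝ) : ℝ :=
  ∑ x, w p x * F x

def coordDiff (F : (Fin n → Bool) → ℝ) (i : Fin n) (x : Fin n → Bool) : ℝ :=
  F (update x i true) - F (update x i false)

lemma sum_w (p : ℝ) : ∑ x : Fin n → Bool, w p x = 1 :=
  calc ∑ x : Fin n → Bool, w p x = ∏ _i : Fin n, ∑ b, bitWeight p b :=
        (Fintype.prod_sum fun _ => bitWeight p).symm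
    _ = 1 := by simp [bitWeight]

lemma w_nonneg {p : ℝ} (hp : p ∈ Set.Icc (0 : ℝ) 1) (x : Fin n → Bool) : 0 ≤ w p x :=
  prod_nonneg fun i _ => by split_ifs <;> linarith [hp.1, hp.2]

lemma w_eq_bitWeight_mul_wExcept (p : ℝ) (x : Fin n → Bool) (i : Fin n) :
    w p x = bitWeight p (x i) * wExcept p x i :=
  (mul_prod_erase univ (fun j => bitWeight p (x j)) (mem_univ i)).symm

lemma wExcept_update (p : ℝ) (x : Fin n → Bool) (i : Fin n) (b : Bool) :
    wExcept p (update x i b) i = wExcept p x i :=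
  prod_congr rfl fun _ hj => by rw [update_of_ne (ne_of_mem_erase hj)]

lemma sum_comp_flipAt {M : Type*} [AddCommMonoid M] (G : (Fin n → Bool) → M) (i : Fin n) :
    ∑ x, G (flipAt x i) = ∑ x, G x := by
  have hinv : Involutive (flipAt · i) := fun x => by simp [flipAt]
  exact Equiv.sum_comp hinv.toPerm G

lemma two_mul_sum_mul_of_update_eq {h : (Fin n → Bool) → ℝ} {i : Fin n}
    (hh : ∀ x b, h (update x i b) = h x) (φ : Bool → ℝ) :
    2 * ∑ x, φ (x i) * h x = (φ true + φ false) * ∑ x, h x := by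
  have hflip : ∑ x, φ (x i) * h x = ∑ x, φ (!x i) * h x := by
    rw [← sum_comp_flipAt _ i]
    simp [flipAt, hh]
  rw [two_mul]
  nth_rw 2 [hflip]
  rw [← sum_add_distrib, mul_sum]
  refine sum_congr rfl fun x _ => ?_
  cases x i <;> simp only [Bool.not_false, Bool.not_true] <;> ring

lemma coordDiff_update (F : (Fin n → Bool) → ℝ) (i : Fin n) (x : Fin n → Bool) (b : Bool) :
    coordDiff F i (update x i b) = coordDiff F i x := by
  simp [coordDiff]

lemma sum_wExcept_mul_sign_mul (F : (Fin n → Bool) → ℝ) (p : ℝ) (i : Fin n) :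
    ∑ x, wExcept p x i * (if x i then 1 else -1) * F x = ∑ x, w p x * coordDiff F i x := by
  have hupd : ∀ b, ∀ x b', wExcept p (update x i b') i * F (update (update x i b') i b)
      = wExcept p x i * F (update x i b) := by
    simp [wExcept_update]
  have hsplit : ∀ x, wExcept p x i * (if x i then 1 else -1) * F x
      = (if x i then 1 else 0) * (wExcept p x i * F (update x i true))
        + (if x i then 0 else -1) * (wExcept p x i * F (update x i false)) := by
    intro x
    rw [← update_eq_self i x]
    cases x i <;> simp
  have hbit : bitWeight p true + bitWeight p false = 1 := by simp [bitWeight]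
  apply mul_left_cancel₀ (two_ne_zero (α := ℝ))
  calc 2 * ∑ x, wExcept p x i * (if x i then 1 else -1) * F x
      = ∑ x, wExcept p x i * F (update x i true)
        - ∑ x, wExcept p x i * F (update x i false) := by
        rw [sum_congr rfl fun x _ => hsplit x, sum_add_distrib, mul_add,
          two_mul_sum_mul_of_update_eq (hupd true) fun b => if b then 1 else 0,
          two_mul_sum_mul_of_update_eq (hupd false) fun b => if b then 0 else -1]
        norm_num
        ring
    _ = (bitWeight p true + bitWeight p false) * ∑ x, wExcept p x i * coordDiff F i x := by
        simp only [hbit, one_mul, coordDiff, mul_sub, sum_sub_distrib]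
    _ = 2 * ∑ x, w p x * coordDiff F i x := by
        rw [← two_mul_sum_mul_of_update_eq (fun x b => by rw [wExcept_update, coordDiff_update])
          (bitWeight p)]
        simp only [w_eq_bitWeight_mul_wExcept p _ i, mul_assoc]

lemma hasDerivAt_w (x : Fin n → Bool) (p : ℝ) :
    HasDerivAt (fun p => w p x) (∑ i, wExcept p x i * (if x i then 1 else -1)) p :=
  HasDerivAt.fun_finsetProd (f := fun i p => bitWeight p (x i)) fun i _ => by
    cases x i
    · simpa [bitWeight] using (hasDerivAt_id' p).const_sub 1
    · simpa [bitWeight] using hasDerivAt_id' p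

lemma hasDerivAt_wExpect (F : (Fin n → Bool) → ℝ) (p : ℝ) :
    HasDerivAt (fun p => wExpect p F) (∑ x, w p x * ∑ i, coordDiff F i x) p := by
  refine (HasDerivAt.fun_sum (u := univ) fun x _ =>
    (hasDerivAt_w x p).mul_const (F x)).congr_deriv ?_
  simp only [sum_mul]
  rw [sum_comm]
  simp only [sum_wExcept_mul_sign_mul, mul_sum]
  exact sum_comm

lemma IsCert.update_eq {f : (Fin n → Bool) → Bool} {x : Fin n → Bool} {S : Finset (Fin n)}
    (hS : IsCert f x S) {i : Fin n} (hi : i ∉ S) (b : Bool) : f (update x i b) = f x :=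
  hS _ fun _ hj => update_of_ne (ne_of_mem_of_not_mem hj hi) _ _

lemma IsCert.sum_coordDiff_le_card {f : (Fin n → Bool) → Bool} {x : Fin n → Bool}
    {S : Finset (Fin n)} (hS : IsCert f x S) :
    ∑ i, coordDiff (fun y => if f y then 1 else 0) i x ≤ #S := by
  rw [← sum_subset (subset_univ S) fun i _ hi => by simp [coordDiff, hS.update_eq hi]]
  refine (sum_le_card_nsmul S _ 1 fun i _ => ?_).trans (by simp)
  simp only [coordDiff]
  split_ifs <;> norm_num

lemma wExpect_le {p C : ℝ} (hp : p ∈ Set.Icc (0 : ℝ) 1) {F : (Fin n → Bool) → ℝ}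
    (hF : ∀ x, F x ≤ C) : wExpect p F ≤ C :=
  calc wExpect p F ≤ ∑ x, w p x * C :=
        sum_le_sum fun x _ => mul_le_mul_of_nonneg_left (hF x) (w_nonneg hp x)
    _ = C := by rw [← sum_mul, sum_w, one_mul]

lemma hasDerivAt_Ep (f : (Fin n → Bool) → Bool) (p : ℝ) :
    HasDerivAt (fun p => Ep p f)
      (∑ x, w p x * ∑ i, coordDiff (fun y => if f y then 1 else 0) i x) p :=
  hasDerivAt_wExpect _ p

lemma deriv_Ep_le {f : (Fin n → Bool) → Bool} {k : ℕ} (hcert : CertLe f k) {p : ℝ}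
    (hp : p ∈ Set.Icc (0 : ℝ) 1) : deriv (fun p => Ep p f) p ≤ k := by
  rw [(hasDerivAt_Ep f p).deriv]
  refine wExpect_le hp fun x => ?_
  obtain ⟨S, hS, hcard⟩ := hcert x
  exact hS.sum_coordDiff_le_card.trans (by exact_mod_cast hcard)

lemma Ep_sub_le {f : (Fin n → Bool) → Bool} {k : ℕ} (hcert : CertLe f k) {q r : ℝ}
    (hq : q ∈ Set.Icc (0 : ℝ) 1) (hr : r ∈ Set.Icc (0 : ℝ) 1) (hrq : r ≤ q) :
    Ep q f - Ep r f ≤ k * (q - r) :=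
  have hdiff : Differentiable ℝ fun p => Ep p f :=
    fun p => (hasDerivAt_Ep f p).differentiableAt
  (convex_Icc 0 1).image_sub_le_mul_sub_of_deriv_le hdiff.continuous.continuousOn
    hdiff.differentiableOn (fun _ hp => deriv_Ep_le hcert (interior_subset hp)) r hr q hq hrq

end

theorem Phi_lipschitz_general {n k : ℕ} (f : (Fin n → Bool) → Bool)
    (hcert : CertLe f k)
    (q r : ℝ) (hq : q ∈ Set.Icc (0 : ℝ) 1) (hr : r ∈ Set.Icc (0 : ℝ) 1) :
    (Ep q f - Ep r f) / (q - r) ≤ (k : ℝ) := by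
  rcases lt_trichotomy r q with hrq | rfl | hqr
  · rw [div_le_iff₀ (sub_pos.2 hrq)]
    exact Ep_sub_le hcert hq hr hrq.le
  · simp
  · rw [← neg_div_neg_eq, neg_sub, neg_sub, div_le_iff₀ (sub_pos.2 hqr)]
    exact Ep_sub_le hcert hr hq hqr.le

/-- For monotone `f` with certificate complexity at most `k`, the map `p ↦ E_p[f]`
is `k`-Lipschitz: all slopes are at most `k`. -/
theorem Phi_lipschitz {n k : ℕ} (f : (Fin n → Bool) → Bool)
    (hmono : ∀ x y : Fin n → Bool, (∀ j, x j ≤ y j) → f x ≤ f y)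
    (hcert : CertLe f k)
    (q r : ℝ) (hq : q ∈ Set.Icc (0 : ℝ) 1) (hr : r ∈ Set.Icc (0 : ℝ) 1) (hqr : q ≠ r) :
    (Ep q f - Ep r f) / (q - r) ≤ (k : ℝ) :=
  Phi_lipschitz_general f hcert q r hq hr
end

section
/- For any monotone Boolean function f : {0,1}^n → {0,1} with certificate complexity at most k, and any coordinate i, the p-biased flip influence of i as a function of p is k-Lipschitz: for all q ≠ r, |Inf_{i,q}^⊕[f] − Inf_{i,r}^⊕[f]| ≤ k·|q − r|. -/
open Finset

namespace FlipLip
variable {n : ℕ}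

noncomputable def ind (b : Bool) : ℝ := if b then 1 else 0

lemma ind_nonneg (b : Bool) : 0 ≤ ind b := by cases b <;> simp [ind]
lemma ind_le_one (b : Bool) : ind b ≤ 1 := by cases b <;> simp [ind]

noncomputable def Aj (h : (Fin n → Bool) → Bool) (j : Fin n) (x : Fin n → Bool) : ℝ :=
  ind (h (Function.update x j true)) - ind (h (Function.update x j false))

/-- weight factor -/
noncomputable def wf (x : Fin n → Bool) (i : Fin n) (p : ℝ) : ℝ :=
  if x i then p else 1 - p

lemma w_eq (p : ℝ) (x : Fin n → Bool) : w p x = ∏ i, wf x i p := rfl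

lemma flipAt_flipAt (x : Fin n → Bool) (j : Fin n) : flipAt (flipAt x j) j = x := by
  simp [flipAt, Function.update_idem]

lemma flipAt_apply_ne (x : Fin n → Bool) {j i : Fin n} (h : i ≠ j) :
    flipAt x j i = x i := by
  simp [flipAt, Function.update_of_ne h]

lemma update_flipAt (x : Fin n → Bool) (j : Fin n) (b : Bool) :
    Function.update (flipAt x j) j b = Function.update x j b := by
  simp [flipAt, Function.update_idem]

lemma sum_flip (j : Fin n) (T : (Fin n → Bool) → ℝ) :
    ∑ x, T (flipAt x j) = ∑ x, T x := by
  apply Fintype.sum_bijective (fun x => flipAt x j)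
  · exact Function.Involutive.bijective (fun x => flipAt_flipAt x j)
  · intro x; rfl

lemma key_swap (h : (Fin n → Bool) → Bool) (p : ℝ) (j : Fin n) :
    ∑ x, (∏ i ∈ univ.erase j, wf x i p) * (if x j then 1 else -1) * ind (h x)
      = ∑ x, w p x * Aj h j x := by
  set T : (Fin n → Bool) → ℝ :=
    fun x => (∏ i ∈ univ.erase j, wf x i p) * (if x j then 1 else -1) * ind (h x) with hT
  set R : (Fin n → Bool) → ℝ := fun x => w p x * Aj h j x with hR
  have hprod : ∀ x : Fin n → Bool, (∏ i ∈ univ.erase j, wf (flipAt x j) i p)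
      = ∏ i ∈ univ.erase j, wf x i p := by
    intro x
    refine Finset.prod_congr rfl (fun i hi => ?_)
    have : i ≠ j := Finset.ne_of_mem_erase hi
    simp [wf, flipAt_apply_ne x this]
  have hw : ∀ x : Fin n → Bool, w p x = wf x j p * ∏ i ∈ univ.erase j, wf x i p := by
    intro x; rw [w_eq]; exact (Finset.mul_prod_erase univ _ (Finset.mem_univ j)).symm
  have hAflip : ∀ x, Aj h j (flipAt x j) = Aj h j x := by
    intro x; simp [Aj, update_flipAt]
  have pointwise : ∀ x, T x + T (flipAt x j) = R x + R (flipAt x j) := by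
    intro x
    have hfj : flipAt x j j = !x j := by simp [flipAt]
    set P : ℝ := ∏ i ∈ univ.erase j, wf x i p with hP
    by_cases hxj : x j
    · have hx1 : Function.update x j true = x := by
        rw [← hxj]; exact Function.update_eq_self j x
      have hx0 : flipAt x j = Function.update x j false := by
        simp [flipAt, hxj]
      have hA : Aj h j x = ind (h x) - ind (h (flipAt x j)) := by
        rw [Aj, hx1, hx0]
      have e1 : T x = P * ind (h x) := by simp [hT, hxj, hP]
      have e2 : T (flipAt x j) = -(P * ind (h (flipAt x j))) := by
        rw [hT]
        simp only [hprod, hfj, hxj]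
        simp [← hP]
      have f1 : R x = p * P * Aj h j x := by
        rw [hR]
        show w p x * Aj h j x = _
        rw [hw x, ← hP]
        have hwj : wf x j p = p := by simp [wf, hxj]
        rw [hwj]
      have f2 : R (flipAt x j) = (1 - p) * P * Aj h j x := by
        rw [hR]
        show w p (flipAt x j) * Aj h j (flipAt x j) = _
        rw [hAflip, hw (flipAt x j), hprod, ← hP]
        have hwj : wf (flipAt x j) j p = 1 - p := by simp [wf, hfj, hxj]
        rw [hwj]
      rw [e1, e2, f1, f2, hA]; ring
    · have hxj' : x j = false := by simpa using hxj
      have hx0 : Function.update x j false = x := by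
        rw [← hxj']; exact Function.update_eq_self j x
      have hx1 : flipAt x j = Function.update x j true := by
        simp [flipAt, hxj']
      have hA : Aj h j x = ind (h (flipAt x j)) - ind (h x) := by
        rw [Aj, hx0, hx1]
      have e1 : T x = -(P * ind (h x)) := by
        rw [hT]; simp only [hxj']; simp [← hP]
      have e2 : T (flipAt x j) = P * ind (h (flipAt x j)) := by
        rw [hT]
        simp only [hprod, hfj, hxj']
        simp [← hP]
      have f1 : R x = (1 - p) * P * Aj h j x := by
        rw [hR]
        show w p x * Aj h j x = _
        rw [hw x, ← hP]
        have hwj : wf x j p = 1 - p := by simp [wf, hxj']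
        rw [hwj]
      have f2 : R (flipAt x j) = p * P * Aj h j x := by
        rw [hR]
        show w p (flipAt x j) * Aj h j (flipAt x j) = _
        rw [hAflip, hw (flipAt x j), hprod, ← hP]
        have hwj : wf (flipAt x j) j p = p := by simp [wf, hfj, hxj']
        rw [hwj]
      rw [e1, e2, f1, f2, hA]; ring
  have h2 : (2:ℝ) * ∑ x, T x = 2 * ∑ x, R x := by
    have hTs : ∑ x, T (flipAt x j) = ∑ x, T x := sum_flip j T
    have hRs : ∑ x, R (flipAt x j) = ∑ x, R x := sum_flip j R
    calc (2:ℝ) * ∑ x, T x = ∑ x, T x + ∑ x, T (flipAt x j) := by rw [hTs]; ring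
    _ = ∑ x, (T x + T (flipAt x j)) := by rw [Finset.sum_add_distrib]
    _ = ∑ x, (R x + R (flipAt x j)) := Finset.sum_congr rfl (fun x _ => pointwise x)
    _ = ∑ x, R x + ∑ x, R (flipAt x j) := by rw [Finset.sum_add_distrib]
    _ = 2 * ∑ x, R x := by rw [hRs]; ring
  exact mul_left_cancel₀ two_ne_zero h2

lemma hasDerivAt_Ep (h : (Fin n → Bool) → Bool) (p : ℝ) :
    HasDerivAt (fun p => Ep p h) (∑ x, w p x * (∑ j, Aj h j x)) p := by
  have hx : ∀ x : Fin n → Bool, HasDerivAt (fun p => w p x * ind (h x))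
      ((∑ j, (∏ i ∈ univ.erase j, wf x i p) * (if x j then 1 else -1)) * ind (h x)) p := by
    intro x
    have hp : HasDerivAt (fun p => w p x)
        (∑ j, (∏ i ∈ univ.erase j, wf x i p) * (if x j then 1 else -1)) p := by
      have : HasDerivAt (fun p => ∏ i, wf x i p)
          (∑ j, (∏ i ∈ univ.erase j, wf x i p) • (if x j then (1:ℝ) else -1)) p := by
        apply HasDerivAt.fun_finsetProd
        intro j _
        by_cases hxj : x j
        · have hfun : wf x j = fun q : ℝ => q := by funext q; simp [wf, hxj]
          rw [hfun, show (if x j then (1:ℝ) else -1) = 1 by simp [hxj]]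
          exact hasDerivAt_id p
        · have hfun : wf x j = fun q : ℝ => 1 - q := by funext q; simp [wf, hxj]
          rw [hfun, show (if x j then (1:ℝ) else -1) = -1 by simp [hxj]]
          simpa using (hasDerivAt_id p).const_sub 1
      simpa [w_eq, smul_eq_mul] using this
    exact hp.mul_const _
  have hsum := HasDerivAt.fun_sum (fun x (_ : x ∈ (univ : Finset (Fin n → Bool))) => hx x)
  have heq : (fun p => ∑ x, w p x * ind (h x)) = fun p => Ep p h := by
    funext p; simp [Ep, ind]
  rw [heq] at hsum
  refine hsum.congr_deriv ?_
  symm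
  calc ∑ x, w p x * (∑ j, Aj h j x)
      = ∑ x, ∑ j, w p x * Aj h j x :=
        Finset.sum_congr rfl (fun x _ => Finset.mul_sum _ _ _)
    _ = ∑ j, ∑ x, w p x * Aj h j x := Finset.sum_comm
    _ = ∑ j, ∑ x, (∏ i ∈ univ.erase j, wf x i p) * (if x j then 1 else -1) * ind (h x) :=
        Finset.sum_congr rfl (fun j _ => (key_swap h p j).symm)
    _ = ∑ x, ∑ j, (∏ i ∈ univ.erase j, wf x i p) * (if x j then 1 else -1) * ind (h x) :=
        Finset.sum_comm
    _ = ∑ x, (∑ j, (∏ i ∈ univ.erase j, wf x i p) * (if x j then 1 else -1)) * ind (h x) :=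
        Finset.sum_congr rfl (fun x _ => (Finset.sum_mul _ _ _).symm)

lemma w_nonneg {p : ℝ} (hp : p ∈ Set.Icc (0:ℝ) 1) (x : Fin n → Bool) : 0 ≤ w p x := by
  rw [w_eq]
  apply Finset.prod_nonneg
  intro i _
  rcases hp with ⟨h0, h1⟩
  by_cases hxi : x i <;> simp [wf, hxi] <;> linarith

lemma sum_w (p : ℝ) : ∑ x : Fin n → Bool, w p x = 1 := by
  have key : ∏ i : Fin n, ∑ b : Bool, (if b then p else 1 - p)
      = ∑ x ∈ Fintype.piFinset (fun _ : Fin n => (univ : Finset Bool)),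
        ∏ i, (if x i then p else 1 - p) := Finset.prod_univ_sum _ _
  simp only [Fintype.piFinset_univ] at key
  unfold w
  rw [← key]
  have h1 : ∀ i : Fin n, (∑ b : Bool, (if b then p else 1 - p)) = 1 := by
    intro i; simp
  rw [Finset.prod_congr rfl (fun i _ => h1 i)]
  simp

lemma ind_mono {a b : Bool} (h : a ≤ b) : ind a ≤ ind b := by
  cases a <;> cases b <;> first | (exact absurd h (by decide)) | simp [ind]

lemma ind_bne {a b : Bool} (h : a ≤ b) : ind (a != b) = ind b - ind a := by
  cases a <;> cases b <;> first | (exact absurd h (by decide)) | simp [ind]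

lemma bne_comm' (a b : Bool) : (a != b) = (b != a) := by
  cases a <;> cases b <;> rfl

variable {k : ℕ} {f : (Fin n → Bool) → Bool} {i : Fin n}

lemma update_le_update (x : Fin n → Bool) (j : Fin n) :
    ∀ l, Function.update x j false l ≤ Function.update x j true l := by
  intro l
  by_cases hl : l = j
  · subst hl; simp
  · simp [Function.update_of_ne hl]

lemma restrict_mono (hmono : ∀ x y : Fin n → Bool, (∀ j, x j ≤ y j) → f x ≤ f y) (b : Bool)
    {x y : Fin n → Bool} (hxy : ∀ j, x j ≤ y j) : _root_.restrict f i b x ≤ _root_.restrict f i b y := by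
  apply hmono
  intro j
  by_cases hj : j = i
  · subst hj; simp
  · simp [Function.update_of_ne hj]; exact hxy j

lemma Aj_restrict_nonneg (hmono : ∀ x y : Fin n → Bool, (∀ j, x j ≤ y j) → f x ≤ f y)
    (b : Bool) (j : Fin n) (x : Fin n → Bool) : 0 ≤ Aj (_root_.restrict f i b) j x := by
  have := restrict_mono (i := i) hmono b (update_le_update x j)
  have := ind_mono this
  unfold Aj
  linarith

lemma sum_Aj_restrict_le (hcert : CertLe f k) (b : Bool) (x : Fin n → Bool) :
    ∑ j, Aj (_root_.restrict f i b) j x ≤ (k : ℝ) := by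
  obtain ⟨S, hS, hcard⟩ := hcert (Function.update x i b)
  calc ∑ j, Aj (_root_.restrict f i b) j x ≤ ∑ j, (if j ∈ S then (1:ℝ) else 0) := by
        apply Finset.sum_le_sum
        intro j _
        by_cases hjS : j ∈ S
        · simp only [hjS, if_true]
          unfold Aj
          have h1 := ind_le_one (_root_.restrict f i b (Function.update x j true))
          have h2 := ind_nonneg (_root_.restrict f i b (Function.update x j false))
          linarith
        · simp only [hjS, if_false]
          have key : ∀ c : Bool,
              f (Function.update (Function.update x j c) i b) = f (Function.update x i b) := by
            intro c
            apply hS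
            intro i' hi'
            have hij : i' ≠ j := fun h => hjS (h ▸ hi')
            by_cases hii : i' = i
            · subst hii; simp
            · simp [Function.update_of_ne hii, Function.update_of_ne hij]
          unfold Aj _root_.restrict
          rw [key true, key false]
          simp
    _ = (S.card : ℝ) := by simp
    _ ≤ (k : ℝ) := by exact_mod_cast hcard

lemma ind_g_eq (hmono : ∀ x y : Fin n → Bool, (∀ j, x j ≤ y j) → f x ≤ f y)
    (y : Fin n → Bool) :
    ind (f (flipAt y i) != f y)
      = ind (_root_.restrict f i true y) - ind (_root_.restrict f i false y) := by
  have hle : _root_.restrict f i false y ≤ _root_.restrict f i true y := by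
    apply hmono; exact update_le_update y i
  by_cases hyi : y i
  · have h1 : flipAt y i = Function.update y i false := by simp [flipAt, hyi]
    have h2 : f y = _root_.restrict f i true y := by
      unfold _root_.restrict
      congr 1
      rw [← hyi]; exact (Function.update_eq_self i y).symm
    have h1' : f (flipAt y i) = _root_.restrict f i false y := by rw [h1]; rfl
    rw [h1', h2, ind_bne hle]
  · have hyi' : y i = false := by simpa using hyi
    have h1 : flipAt y i = Function.update y i true := by simp [flipAt, hyi']
    have h2 : f y = _root_.restrict f i false y := by
      unfold _root_.restrict
      congr 1
      rw [← hyi']; exact (Function.update_eq_self i y).symm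
    have h1' : f (flipAt y i) = _root_.restrict f i true y := by rw [h1]; rfl
    rw [h1', h2, bne_comm', ind_bne hle]
end FlipLip

/-- For monotone `f` with certificate complexity at most `k`, the flip influence of
any coordinate `i`, as a function of the bias `p`, is `k`-Lipschitz. -/
theorem flipInf_lipschitz {n k : ℕ} (f : (Fin n → Bool) → Bool)
    (hmono : ∀ x y : Fin n → Bool, (∀ j, x j ≤ y j) → f x ≤ f y)
    (hcert : CertLe f k) (i : Fin n)
    (q r : ℝ) (hq : q ∈ Set.Icc (0 : ℝ) 1) (hr : r ∈ Set.Icc (0 : ℝ) 1) (hqr : q ≠ r) :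
    |flipInf i q f - flipInf i r f| ≤ (k : ℝ) * |q - r| := by
  classical
  set g : (Fin n → Bool) → Bool := fun y => f (flipAt y i) != f y with hg
  have hflip : ∀ p : ℝ, flipInf i p f = Ep p g := by
    intro p
    unfold flipInf Ep
    refine Finset.sum_congr rfl (fun x _ => ?_)
    congr 1
    simp only [hg]
    by_cases hx : f (flipAt x i) = f x <;> simp [hx]
  have hboundA : ∀ x : Fin n → Bool, |∑ j, FlipLip.Aj g j x| ≤ (k : ℝ) := by
    intro x
    have hsplit : ∀ j : Fin n, FlipLip.Aj g j x
        = FlipLip.Aj (_root_.restrict f i true) j x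
          - FlipLip.Aj (_root_.restrict f i false) j x := by
      intro j
      unfold FlipLip.Aj
      simp only [hg]
      rw [FlipLip.ind_g_eq hmono (Function.update x j true),
        FlipLip.ind_g_eq hmono (Function.update x j false)]
      ring
    have e : ∑ j, FlipLip.Aj g j x
        = (∑ j, FlipLip.Aj (_root_.restrict f i true) j x)
          - ∑ j, FlipLip.Aj (_root_.restrict f i false) j x := by
      rw [← Finset.sum_sub_distrib]
      exact Finset.sum_congr rfl (fun j _ => hsplit j)
    have h1 := FlipLip.sum_Aj_restrict_le (i := i) hcert true x
    have h0 := FlipLip.sum_Aj_restrict_le (i := i) hcert false x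
    have h1' : 0 ≤ ∑ j, FlipLip.Aj (_root_.restrict f i true) j x :=
      Finset.sum_nonneg fun j _ => FlipLip.Aj_restrict_nonneg hmono true j x
    have h0' : 0 ≤ ∑ j, FlipLip.Aj (_root_.restrict f i false) j x :=
      Finset.sum_nonneg fun j _ => FlipLip.Aj_restrict_nonneg hmono false j x
    rw [e, abs_le]
    constructor <;> linarith
  have hD : ∀ p ∈ Set.Icc (0:ℝ) 1, ‖∑ x, w p x * (∑ j, FlipLip.Aj g j x)‖ ≤ (k:ℝ) := by
    intro p hp
    rw [Real.norm_eq_abs]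
    calc |∑ x, w p x * ∑ j, FlipLip.Aj g j x|
        ≤ ∑ x, |w p x * ∑ j, FlipLip.Aj g j x| := Finset.abs_sum_le_sum_abs _ _
      _ ≤ ∑ x, w p x * (k:ℝ) := by
          apply Finset.sum_le_sum
          intro x _
          rw [abs_mul, abs_of_nonneg (FlipLip.w_nonneg hp x)]
          exact mul_le_mul_of_nonneg_left (hboundA x) (FlipLip.w_nonneg hp x)
      _ = (k:ℝ) := by rw [← Finset.sum_mul, FlipLip.sum_w, one_mul]
  have key := Convex.norm_image_sub_le_of_norm_hasDerivWithin_le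
      (f := fun p => Ep p g) (f' := fun p => ∑ x, w p x * ∑ j, FlipLip.Aj g j x)
      (fun p _ => (FlipLip.hasDerivAt_Ep g p).hasDerivWithinAt) hD (convex_Icc 0 1) hr hq
  rw [hflip q, hflip r]
  simp only [← Real.norm_eq_abs]
  exact key
end
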